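/- arXiv:1911.03693 — 5 statements merged into one kernel-verified Lean document; each statement's English description precedes it below -/
import Mathlib

section
/- For all x, y ≥ 0 and t > 0, |sinh(xy/t)·exp(-(x²+y²)/(2t)) - xy/t| ≤ xy(x²+y²)/(2t²). -/
/-!
With `u = (x - y)² / (2t)` and `v = (x + y)² / (2t)` the left side is `(e^{-u} - e^{-v})/2 - (v - u)/2`,
i.e. `-(1/2) ∫_u^v (1 - e^{-z}) dz`. As `0 ≤ 1 - e^{-z} ≤ z` on `[u, v] ⊆ [0, ∞)`, its absolute value is
at most `(v² - u²)/4`, and `(x + y)⁴ - (x - y)⁴ = 8xy(x² + y²)`.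
-/

open Real intervalIntegral

lemma sinh_mul_exp (a b : ℝ) : sinh a * exp b = (exp (a + b) - exp (b - a)) / 2 := by
  rw [sinh_eq, div_mul_eq_mul_div, sub_mul, ← exp_add, ← exp_add, neg_add_eq_sub]

lemma integral_one_sub_exp_neg (u v : ℝ) :
    ∫ z in u..v, (1 - exp (-z)) = (v - u) - (exp (-u) - exp (-v)) := by
  rw [integral_sub intervalIntegrable_const
      ((by fun_prop : Continuous fun z => exp (-z)).intervalIntegrable _ _),
    integral_comp_neg (f := exp), integral_exp, integral_const, smul_eq_mul, mul_one]

lemma integral_one_sub_exp_neg_nonneg {u v : ℝ} (hu : 0 ≤ u) (huv : u ≤ v) :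
    0 ≤ ∫ z in u..v, (1 - exp (-z)) :=
  integral_nonneg huv fun z hz => by
    linarith [exp_le_one_iff.mpr (neg_nonpos.mpr (hu.trans hz.1))]

lemma integral_one_sub_exp_neg_le {u v : ℝ} (huv : u ≤ v) :
    ∫ z in u..v, (1 - exp (-z)) ≤ (v ^ 2 - u ^ 2) / 2 := by
  rw [← integral_id]
  refine integral_mono_on huv ((by fun_prop : Continuous fun z => 1 - exp (-z)).intervalIntegrable _ _)
    intervalIntegrable_id fun z _ => ?_
  linarith [add_one_le_exp (-z)]

lemma abs_exp_neg_sub_exp_neg_sub_le {u v : ℝ} (hu : 0 ≤ u) (huv : u ≤ v) :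
    |(exp (-u) - exp (-v)) / 2 - (v - u) / 2| ≤ (v ^ 2 - u ^ 2) / 4 := by
  have h := integral_one_sub_exp_neg u v
  rw [abs_le]
  constructor <;> linarith [integral_one_sub_exp_neg_nonneg hu huv, integral_one_sub_exp_neg_le huv]

/-- For `x, y ≥ 0` and `t > 0`,
`|sinh(xy/t)·exp(-(x²+y²)/(2t)) - xy/t| ≤ xy(x²+y²)/(2t²)`. -/
theorem abs_sinh_exp_sub_le (x y t : ℝ) (hx : 0 ≤ x) (hy : 0 ≤ y) (ht : 0 < t) :
    |Real.sinh (x * y / t) * Real.exp (-(x ^ 2 + y ^ 2) / (2 * t)) - x * y / t|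
      ≤ x * y * (x ^ 2 + y ^ 2) / (2 * t ^ 2) := by
  set u := (x - y) ^ 2 / (2 * t)
  set v := (x + y) ^ 2 / (2 * t)
  have hu : 0 ≤ u := by positivity
  have huv : u ≤ v := by
    apply div_le_div_of_nonneg_right _ (by positivity)
    nlinarith [mul_nonneg hx hy]
  have hsinh : Real.sinh (x * y / t) * Real.exp (-(x ^ 2 + y ^ 2) / (2 * t))
      = (exp (-u) - exp (-v)) / 2 := by
    rw [sinh_mul_exp]
    congr 3 <;> simp only [u, v] <;> field_simp <;> ring
  have hxy : x * y / t = (v - u) / 2 := by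
    simp only [u, v]
    field_simp
    ring
  calc _ = |(exp (-u) - exp (-v)) / 2 - (v - u) / 2| := by rw [hsinh, hxy]
    _ ≤ (v ^ 2 - u ^ 2) / 4 := abs_exp_neg_sub_exp_neg_sub_le hu huv
    _ = x * y * (x ^ 2 + y ^ 2) / (2 * t ^ 2) := by
      simp only [u, v]
      field_simp
      ring
end

section
/- For all x, y ≥ 0 and t > 0, xy/t - sinh(xy/t)·exp(-(x²+y²)/(2t)) ≥ 0. -/
/-! With `a = xy/t`, AM-GM gives `a ≤ (x² + y²)/(2t)`, so (as `sinh a ≥ 0`) the left-hand side is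
at most `sinh a · e^{-a} = (1 - e^{-2a})/2`, and this is `≤ a` by `1 + u ≤ eᵘ` at `u = -2a`. -/

open Real

theorem Real.sinh_mul_exp_neg (a : ℝ) : sinh a * exp (-a) = (1 - exp (-(2 * a))) / 2 := by
  rw [sinh_eq, div_mul_eq_mul_div, sub_mul, ← exp_add, ← exp_add, add_neg_cancel, exp_zero]
  ring_nf

theorem Real.sinh_mul_exp_neg_le (a : ℝ) : sinh a * exp (-a) ≤ a := by
  rw [sinh_mul_exp_neg]
  linarith [add_one_le_exp (-(2 * a))]

theorem Real.sinh_mul_exp_neg_le_of_le {a s : ℝ} (ha : 0 ≤ a) (has : a ≤ s) :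
    sinh a * exp (-s) ≤ a :=
  calc sinh a * exp (-s) ≤ sinh a * exp (-a) := by gcongr
    _ ≤ a := sinh_mul_exp_neg_le a

theorem mul_div_le_sq_add_sq_div {x y t : ℝ} (ht : 0 < t) : x * y / t ≤ (x ^ 2 + y ^ 2) / (2 * t) := by
  rw [div_le_div_iff₀ ht (by positivity)]
  nlinarith [two_mul_le_add_sq x y]

/-- For `x, y ≥ 0` and `t > 0`, `xy/t - sinh(xy/t)·exp(-(x²+y²)/(2t)) ≥ 0`. -/
theorem sinh_exp_le_lin (x y t : ℝ) (hx : 0 ≤ x) (hy : 0 ≤ y) (ht : 0 < t) :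
    0 ≤ x * y / t - Real.sinh (x * y / t) * Real.exp (-(x ^ 2 + y ^ 2) / (2 * t)) := by
  rw [sub_nonneg, neg_div]
  exact sinh_mul_exp_neg_le_of_le (by positivity) (mul_div_le_sq_add_sq_div ht)
end

section
/- For each x > 0, t > 0, the function y ↦ (2/√(2πt))·(y/x)·sinh(xy/t)·exp(-(x²+y²)/(2t)) is a probability density on (0,∞), i.e., it is nonnegative and its integral over (0,∞) equals 1. -/
open Real MeasureTheory Set

/-! Since `2 sinh(xy/t) exp(-(x²+y²)/(2t)) = exp(-(y-x)²/(2t)) - exp(-(y+x)²/(2t))`, the density is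
`y ↦ (y/x)(p_x(y) - p_{-x}(y))` with `p_m` the `N(m, t)` density. The function
`y ↦ y (p_x(y) - p_{-x}(y))` is even, so its integral over `(0, ∞)` is half its integral over `ℝ`,
which is the difference of the means `x - (-x) = 2x`. -/

open ProbabilityTheory NNReal

theorem integral_Ioi_zero_eq_half_integral_of_even {f : ℝ → ℝ} (hf : Function.Even f) :
    ∫ x in Ioi (0 : ℝ), f x = (∫ x, f x) / 2 := by
  have hf_abs : ∀ x, f |x| = f x := fun x ↦ by
    rcases abs_choice x with h | h <;> rw [h]
    exact hf x
  rw [← funext hf_abs, integral_comp_abs, funext hf_abs]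
  ring

namespace ProbabilityTheory

lemma gaussianPDFReal_neg (m : ℝ) (v : ℝ≥0) (y : ℝ) :
    gaussianPDFReal m v (-y) = gaussianPDFReal (-m) v y := by
  simp only [gaussianPDFReal, sub_neg_eq_add, neg_sub_left, neg_sq, add_comm]

lemma gaussianPDFReal_sub_gaussianPDFReal_neg (m : ℝ) (v : ℝ≥0) (y : ℝ) :
    gaussianPDFReal m v y - gaussianPDFReal (-m) v y
      = 2 / √(2 * π * v) * sinh (m * y / v) * exp (-(m ^ 2 + y ^ 2) / (2 * v)) := by
  have h₁ : -(y - m) ^ 2 / (2 * v) = m * y / v + -(m ^ 2 + y ^ 2) / (2 * v) := by ring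
  have h₂ : -(y - -m) ^ 2 / (2 * v) = -(m * y / v) + -(m ^ 2 + y ^ 2) / (2 * v) := by ring
  rw [gaussianPDFReal, gaussianPDFReal, h₁, h₂, exp_add, exp_add, sinh_eq]
  ring

lemma integrable_mul_gaussianPDFReal (m : ℝ) (v : ℝ≥0) :
    Integrable fun y ↦ y * gaussianPDFReal m v y := by
  rcases eq_or_ne v 0 with rfl | hv
  · simp
  have h := (memLp_id_gaussianReal (μ := m) (v := v) 1).integrable le_rfl
  rw [gaussianReal_of_var_ne_zero _ hv, integrable_withDensity_iff_integrable_smul'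
    (measurable_gaussianPDF m v) (ae_of_all _ fun _ ↦ gaussianPDF_lt_top)] at h
  simpa [gaussianPDF, gaussianPDFReal_nonneg, mul_comm] using h

lemma integral_mul_gaussianPDFReal (m : ℝ) {v : ℝ≥0} (hv : v ≠ 0) :
    ∫ y, y * gaussianPDFReal m v y = m := by
  simpa [integral_gaussianReal_eq_integral_smul hv, mul_comm] using
    integral_id_gaussianReal (μ := m) (v := v)

end ProbabilityTheory

/-- For each `x > 0`, `t > 0`, the function
`y ↦ (2/√(2πt))·(y/x)·sinh(xy/t)·exp(-(x²+y²)/(2t))`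
is a probability density on `(0,∞)`. -/
theorem bessel3_density_is_probability_density (x t : ℝ) (hx : 0 < x) (ht : 0 < t) :
    (∀ y ∈ Ioi (0 : ℝ),
        0 ≤ (2 / Real.sqrt (2 * π * t)) * (y / x) * Real.sinh (x * y / t)
          * Real.exp (-(x ^ 2 + y ^ 2) / (2 * t))) ∧
    ∫ y in Ioi (0 : ℝ),
        (2 / Real.sqrt (2 * π * t)) * (y / x) * Real.sinh (x * y / t)
          * Real.exp (-(x ^ 2 + y ^ 2) / (2 * t)) = 1 := by
  refine ⟨fun y hy ↦ ?_, ?_⟩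
  · have hy : 0 < y := hy
    have : 0 ≤ sinh (x * y / t) := sinh_nonneg_iff.mpr (by positivity)
    positivity
  lift t to ℝ≥0 using ht.le
  have ht : t ≠ 0 := by exact_mod_cast ht.ne'
  set g : ℝ → ℝ := fun y ↦ y * (gaussianPDFReal x t y - gaussianPDFReal (-x) t y)
  have hg_even : Function.Even g := fun y ↦ by
    simp only [g, gaussianPDFReal_neg, neg_neg]
    ring
  have hg_integral : ∫ y, g y = 2 * x := by
    simp only [g, mul_sub]
    rw [integral_sub (integrable_mul_gaussianPDFReal _ _) (integrable_mul_gaussianPDFReal _ _),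
      integral_mul_gaussianPDFReal _ ht, integral_mul_gaussianPDFReal _ ht]
    ring
  calc ∫ y in Ioi (0 : ℝ), 2 / √(2 * π * t) * (y / x) * sinh (x * y / t)
          * exp (-(x ^ 2 + y ^ 2) / (2 * t))
      _ = ∫ y in Ioi (0 : ℝ), x⁻¹ * g y := by
        simp only [g, gaussianPDFReal_sub_gaussianPDFReal_neg]
        congr with y
        ring
      _ = 1 := by
        rw [integral_const_mul, integral_Ioi_zero_eq_half_integral_of_even hg_even, hg_integral]
        field_simp
end

section
/- Let x > 0 and let f : (0,∞) → [0,∞) be measurable and nonnegative with ∫₀^∞ f(y)y²dy < ∞ and ∫₀^∞ f(y)y⁴dy < ∞. Then t·∫₀^∞ f(y)·[y² - t·(y/x)·sinh(xy/t)·e^{-(x²+y²)/(2t)}] dy → ∫₀^∞ f(y)·y²(x²+y²)/2 dy as t → ∞. -/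
/-!
With `u = xy/t` and `a = (x² + y²)/(2t)` the rescaled density is `y² (sinh u / u) e^{-a}`.
As `sinh u - u = o(u²)` and `t (1 - e^{-a}) → (x² + y²)/2`, the integrand times `t` converges
pointwise to `f(y) y² (x² + y²)/2`. Since `u ≤ a`, `sinh u e^{-a} ≤ sinh u e^{-u} ≤ u`;
together with `u ≤ sinh u` and `1 - e^{-a} ≤ a` this gives
`0 ≤ t (y² - y² (sinh u / u) e^{-a}) ≤ y² (x² + y²)/2`, which is integrable against `|f|` by
the moment assumptions, and dominated convergence concludes.
-/

open MeasureTheory Set Filter Real Topology Asymptotics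

theorem Real.sinh_mul_exp_neg_le_self (u : ℝ) : sinh u * exp (-u) ≤ u := by
  have h : sinh u * exp (-u) = (1 - exp (-(2 * u))) / 2 := by
    rw [sinh_eq, div_mul_eq_mul_div, sub_mul, ← exp_add, ← exp_add]
    ring_nf
    simp
  have := add_one_le_exp (-(2 * u))
  linarith

theorem Real.sinh_sub_self_isLittleO : (fun u => sinh u - u) =o[𝓝 0] fun u => u ^ 2 := by
  have hcosh : (fun u => cosh u - 1) =o[𝓝 0] fun u => u := by
    simpa using (hasDerivAt_cosh 0).isLittleO
  simpa using convex_univ.isLittleO_pow_succ_real (mem_univ 0) (n := 1)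
    (fun u _ => ((hasDerivAt_sinh u).sub (hasDerivAt_id u)).hasDerivWithinAt)
    (by simpa using hcosh)

theorem HasDerivAt.tendsto_mul_sub_inv_atTop {f : ℝ → ℝ} {f' : ℝ} (h : HasDerivAt f f' 0) :
    Tendsto (fun t => t * (f t⁻¹ - f 0)) atTop (𝓝 f') := by
  simpa [Function.comp_def] using h.tendsto_slope_zero_right.comp tendsto_inv_atTop_nhdsGT_zero

theorem tendsto_mul_one_sub_exp_neg_div (c : ℝ) :
    Tendsto (fun t => t * (1 - exp (-c / t))) atTop (𝓝 c) := by
  have hd : HasDerivAt (fun s => exp (-c * s)) (-c) 0 := by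
    simpa using ((hasDerivAt_id (0 : ℝ)).const_mul (-c)).exp
  have h := hd.tendsto_mul_sub_inv_atTop.neg
  simp only [mul_zero, exp_zero, neg_neg] at h
  refine h.congr fun t => ?_
  rw [← mul_neg, neg_sub, div_eq_mul_inv]

theorem tendsto_sq_mul_sinh_div_sub_div (b : ℝ) :
    Tendsto (fun t => t ^ 2 * (sinh (b / t) - b / t)) atTop (𝓝 0) := by
  have hb : Tendsto (fun t : ℝ => b / t) atTop (𝓝 0) :=
    tendsto_const_nhds.div_atTop tendsto_id
  have h := (sinh_sub_self_isLittleO.comp_tendsto hb).tendsto_div_nhds_zero.const_mul (b ^ 2)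
  rw [mul_zero] at h
  refine h.congr' ?_
  filter_upwards [eventually_ne_atTop 0] with t ht
  rcases eq_or_ne b 0 with rfl | hb
  · simp
  · simp only [Function.comp_apply]
    field_simp

/-- `K_t q_t(x, y)`, where `q_t(x, y) = (y/x) (2πt)^{-1/2} (e^{-(x-y)²/(2t)} - e^{-(x+y)²/(2t)})`
is the transition density of the Bessel-3 process and `K_t = t √(2πt) / 2`. -/
noncomputable def rescaledBessel3Density (x y t : ℝ) : ℝ :=
  t * (y / x) * sinh (x * y / t) * exp (-(x ^ 2 + y ^ 2) / (2 * t))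

section Bounds

variable {x y t : ℝ}

theorem rescaledBessel3Density_le_sq (hx : 0 < x) (hy : 0 ≤ y) (ht : 0 < t) :
    rescaledBessel3Density x y t ≤ y ^ 2 := by
  have hua : x * y / t ≤ (x ^ 2 + y ^ 2) / (2 * t) := by
    rw [div_le_div_iff₀ ht (by positivity)]
    nlinarith [sq_nonneg (x - y)]
  calc rescaledBessel3Density x y t
      = t * (y / x) * (sinh (x * y / t) * exp (-((x ^ 2 + y ^ 2) / (2 * t)))) := by
        rw [rescaledBessel3Density, neg_div, mul_assoc]
    _ ≤ t * (y / x) * (sinh (x * y / t) * exp (-(x * y / t))) := by gcongr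
    _ ≤ t * (y / x) * (x * y / t) :=
        mul_le_mul_of_nonneg_left (sinh_mul_exp_neg_le_self _) (by positivity)
    _ = y ^ 2 := by field_simp

theorem sq_mul_exp_le_rescaledBessel3Density (hx : 0 < x) (hy : 0 ≤ y) (ht : 0 < t) :
    y ^ 2 * exp (-(x ^ 2 + y ^ 2) / (2 * t)) ≤ rescaledBessel3Density x y t := by
  calc y ^ 2 * exp (-(x ^ 2 + y ^ 2) / (2 * t))
      = t * (y / x) * (x * y / t) * exp (-(x ^ 2 + y ^ 2) / (2 * t)) := by field_simp
    _ ≤ rescaledBessel3Density x y t := by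
        unfold rescaledBessel3Density
        gcongr
        exact self_le_sinh_iff.2 (by positivity)

theorem abs_mul_sq_sub_rescaledBessel3Density_le (hx : 0 < x) (hy : 0 ≤ y) (ht : 0 < t) :
    |t * (y ^ 2 - rescaledBessel3Density x y t)| ≤ y ^ 2 * (x ^ 2 + y ^ 2) / 2 := by
  have hexp := add_one_le_exp (-(x ^ 2 + y ^ 2) / (2 * t))
  have hlow := sq_mul_exp_le_rescaledBessel3Density hx hy ht
  rw [abs_of_nonneg (mul_nonneg ht.le (sub_nonneg.2 (rescaledBessel3Density_le_sq hx hy ht)))]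
  calc t * (y ^ 2 - rescaledBessel3Density x y t)
      ≤ t * (y ^ 2 * (1 - exp (-(x ^ 2 + y ^ 2) / (2 * t)))) := by gcongr; linarith
    _ ≤ t * (y ^ 2 * ((x ^ 2 + y ^ 2) / (2 * t))) := by
        gcongr
        linarith [neg_div (2 * t) (x ^ 2 + y ^ 2)]
    _ = y ^ 2 * (x ^ 2 + y ^ 2) / 2 := by field_simp

end Bounds

theorem tendsto_mul_sq_sub_rescaledBessel3Density {x : ℝ} (hx : x ≠ 0) (y : ℝ) :
    Tendsto (fun t => t * (y ^ 2 - rescaledBessel3Density x y t)) atTop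
      (𝓝 (y ^ 2 * (x ^ 2 + y ^ 2) / 2)) := by
  rw [mul_div_assoc]
  set c := (x ^ 2 + y ^ 2) / 2
  have hexp : Tendsto (fun t => exp (-c / t)) atTop (𝓝 1) := by
    simpa [Function.comp_def] using
      (continuous_exp.tendsto 0).comp (tendsto_const_nhds.div_atTop tendsto_id)
  have h := ((tendsto_mul_one_sub_exp_neg_div c).const_mul (y ^ 2)).sub
    ((hexp.mul_const (y / x)).mul (tendsto_sq_mul_sinh_div_sub_div (x * y)))
  rw [mul_zero, sub_zero] at h
  refine h.congr' ?_
  -- `t (y² - rescaledBessel3Density x y t)`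
  --   `= y² t (1 - e^{-c/t}) - e^{-c/t} (y/x) t² (sinh (xy/t) - xy/t)`
  filter_upwards [eventually_ne_atTop 0] with t ht
  rw [rescaledBessel3Density, show -(x ^ 2 + y ^ 2) / (2 * t) = -c / t by ring]
  field_simp
  ring

theorem bessel3_semigroup_first_order_general (x : ℝ) (hx : 0 < x)
    (f : ℝ → ℝ) (hmeas : Measurable f)
    (hf2 : IntegrableOn (fun y => f y * y ^ 2) (Ioi (0 : ℝ)))
    (hf4 : IntegrableOn (fun y => f y * y ^ 4) (Ioi (0 : ℝ))) :
    Tendsto (fun t : ℝ =>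
        t * ∫ y in Ioi (0 : ℝ),
            f y * (y ^ 2 - t * (y / x) * Real.sinh (x * y / t)
              * Real.exp (-(x ^ 2 + y ^ 2) / (2 * t))))
      atTop
      (nhds (∫ y in Ioi (0 : ℝ), f y * (y ^ 2 * (x ^ 2 + y ^ 2) / 2))) := by
  have hbound : IntegrableOn (fun y => ‖f y‖ * (y ^ 2 * (x ^ 2 + y ^ 2) / 2)) (Ioi 0) := by
    refine IntegrableOn.congr_fun ((hf2.norm.const_mul (x ^ 2 / 2)).add
      (hf4.norm.const_mul (1 / 2))) (fun y hy => ?_) measurableSet_Ioi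
    simp only [Pi.add_apply, norm_mul, norm_pow, Real.norm_eq_abs, abs_of_pos (mem_Ioi.1 hy)]
    ring
  refine (tendsto_integral_filter_of_dominated_convergence _
    (F := fun t y => t * (f y * (y ^ 2 - rescaledBessel3Density x y t)))
    (Eventually.of_forall fun t => by unfold rescaledBessel3Density; fun_prop) ?_ hbound ?_).congr
    fun t => integral_const_mul t _
  · filter_upwards [eventually_gt_atTop 0] with t ht
    refine (ae_restrict_iff' measurableSet_Ioi).2 (Eventually.of_forall fun y hy => ?_)
    rw [mul_left_comm, norm_mul]
    exact mul_le_mul_of_nonneg_left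
      (abs_mul_sq_sub_rescaledBessel3Density_le hx (le_of_lt hy) ht) (norm_nonneg _)
  · refine Eventually.of_forall fun y => ?_
    simpa only [mul_left_comm] using
      (tendsto_mul_sq_sub_rescaledBessel3Density hx.ne' y).const_mul (f y)

/-- First-order correction of the rescaled Bessel-3 semigroup: for `x > 0` and
nonnegative `f` with `∫ f y² dy, ∫ f y⁴ dy < ∞`,
`t·∫ f(y)[y² - t(y/x)sinh(xy/t)e^{-(x²+y²)/(2t)}] dy → ∫ f(y) y²(x²+y²)/2 dy`. -/
theorem bessel3_semigroup_first_order (x : ℝ) (hx : 0 < x)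
    (f : ℝ → ℝ) (hmeas : Measurable f) (hf : ∀ y, 0 ≤ f y)
    (hf2 : IntegrableOn (fun y => f y * y ^ 2) (Ioi (0 : ℝ)))
    (hf4 : IntegrableOn (fun y => f y * y ^ 4) (Ioi (0 : ℝ))) :
    Tendsto (fun t : ℝ =>
        t * ∫ y in Ioi (0 : ℝ),
            f y * (y ^ 2 - t * (y / x) * Real.sinh (x * y / t)
              * Real.exp (-(x ^ 2 + y ^ 2) / (2 * t))))
      atTop
      (nhds (∫ y in Ioi (0 : ℝ), f y * (y ^ 2 * (x ^ 2 + y ^ 2) / 2))) :=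
  bessel3_semigroup_first_order_general x hx f hmeas hf2 hf4
end

section
/- Let r > 0, η(x) = x·e^{rx}/r², let μ be a probability measure on (0,∞) with ∫₀^∞ x³e^{rx}μ(dx) < ∞, let α be the measure with density r²ye^{-ry} on (0,∞), and define ψ_μ(f) = ∫₀^∞∫₀^∞ f(y)·(y²(x²+y²)/2)·(η(x)/η(y))·(μ(dx)/μ(η)) dy. Then for any bounded measurable f ≥ 0, ψ_μ(f) = (1/2)·α(f)·∫₀^∞ x²(η∘μ)(dx) + (1/2)·∫₀^∞ f(y)y²α(dy), where (η∘μ)(dx) = η(x)μ(dx)/μ(η). Consequently, if ∫y²f(y)α(dy) > α(f)·∫y²α(dy), then ψ_μ(f) > α(f)·ψ_μ(1). -/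
/-!
Since `y² / η(y) = r² y e^{-ry}` is the density of `α`, the kernel factorises as
`f(y) y² (x² + y²)/2 · η(x)/η(y) = ½ (x² + y²) η(x) · f(y) r² y e^{-ry}`: a sum of two products of
a function of `x` and a function of `y`, so the iterated integral splits without any Fubini argument.
Applied to `f = 1`, where `α(1) = 1`, it gives `ψ_μ(f) - α(f) ψ_μ(1) = ½ (α(y² f) - α(f) α(y²))`.
-/

open MeasureTheory Set

lemma integral_pos_of_ae_pos {α : Type*} [MeasurableSpace α] {μ : Measure α} [NeZero μ]
    {f : α → ℝ} (hfi : Integrable f μ) (hf : ∀ᵐ x ∂μ, 0 < f x) : 0 < ∫ x, f x ∂μ := by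
  rw [integral_pos_iff_support_of_nonneg_ae (hf.mono fun _ hx => hx.le) hfi]
  refine pos_iff_ne_zero.2 fun h => NeZero.ne μ ?_
  rw [← ae_eq_bot, ← Filter.empty_mem_iff_bot]
  filter_upwards [hf, measure_eq_zero_iff_ae_notMem.1 h] with x hpos hx using hx hpos.ne'

lemma correction_kernel_eq (f η : ℝ → ℝ) (M x y : ℝ) :
    f y * (y ^ 2 * (x ^ 2 + y ^ 2) / 2) * (η x / η y) / M
      = f y * (y ^ 2 / η y) * (x ^ 2 * η x / M / 2)
        + f y * y ^ 2 * (y ^ 2 / η y) * (η x / M / 2) := by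
  ring

theorem integral_integral_correction_kernel {μ ν : Measure ℝ} {η f : ℝ → ℝ}
    (hf : Integrable (fun y => f y * (y ^ 2 / η y)) ν)
    (hf₂ : Integrable (fun y => f y * y ^ 2 * (y ^ 2 / η y)) ν)
    (hη : Integrable η μ) (hη₂ : Integrable (fun x => x ^ 2 * η x) μ)
    (hM : ∫ z, η z ∂μ ≠ 0) :
    ∫ x, (∫ y, f y * (y ^ 2 * (x ^ 2 + y ^ 2) / 2) * (η x / η y) / (∫ z, η z ∂μ) ∂ν) ∂μ
      = 1 / 2 * (∫ y, f y * (y ^ 2 / η y) ∂ν) * (∫ x, x ^ 2 * η x / (∫ z, η z ∂μ) ∂μ)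
        + 1 / 2 * ∫ y, f y * y ^ 2 * (y ^ 2 / η y) ∂ν := by
  set M := ∫ z, η z ∂μ
  simp_rw [correction_kernel_eq f η M, integral_add (hf.mul_const _) (hf₂.mul_const _),
    integral_mul_const]
  rw [integral_add ((hη₂.div_const M).div_const 2 |>.const_mul _)
      ((hη.div_const M).div_const 2 |>.const_mul _), integral_const_mul, integral_const_mul]
  simp only [integral_div]
  rw [div_self hM]
  ring

section Exponential

variable {r : ℝ}

lemma sq_div_mul_exp_div_sq (hr : r ≠ 0) (y : ℝ) :
    y ^ 2 / (y * Real.exp (r * y) / r ^ 2) = r ^ 2 * y * Real.exp (-r * y) := by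
  rcases eq_or_ne y 0 with rfl | hy
  · simp
  · rw [neg_mul, Real.exp_neg]
    field_simp

lemma integrableOn_pow_mul_exp_neg_mul_Ioi (n : ℕ) (hr : 0 < r) :
    IntegrableOn (fun y : ℝ => y ^ n * Real.exp (-r * y)) (Ioi 0) := by
  refine (integrableOn_rpow_mul_exp_neg_mul_rpow (s := n) (by linarith [n.cast_nonneg (α := ℝ)])
    zero_lt_one hr).congr_fun (fun y _ => ?_) measurableSet_Ioi
  simp only [Real.rpow_natCast, Real.rpow_one]

lemma integrableOn_mul_pow_mul_mul_exp_neg_mul_Ioi {g : ℝ → ℝ} {C : ℝ}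
    (hg : AEStronglyMeasurable g) (hgC : ∀ y, ‖g y‖ ≤ C) (n : ℕ) (hr : 0 < r) :
    IntegrableOn (fun y => g y * y ^ n * (r ^ 2 * y * Real.exp (-r * y))) (Ioi 0) := by
  have h : IntegrableOn (fun y => r ^ 2 * (g y * (y ^ (n + 1) * Real.exp (-r * y)))) (Ioi 0) :=
    ((integrableOn_pow_mul_exp_neg_mul_Ioi (n + 1) hr).bdd_mul hg.restrict
      (ae_of_all _ hgC)).const_mul (r ^ 2)
  exact h.congr_fun (fun y _ => by ring) measurableSet_Ioi

lemma integral_sq_mul_mul_exp_neg_mul_Ioi (hr : 0 < r) :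
    ∫ y in Ioi (0 : ℝ), r ^ 2 * y * Real.exp (-r * y) = 1 := by
  have h := Real.integral_rpow_mul_exp_neg_mul_Ioi two_pos hr
  norm_num [Real.Gamma_two] at h
  simp_rw [mul_assoc, integral_const_mul, neg_mul, h]
  field_simp

lemma mul_exp_le_exp_add_pow_three_mul_exp (hr : 0 ≤ r) {x : ℝ} (hx : 0 ≤ x) :
    x * Real.exp (r * x) ≤ Real.exp r + x ^ 3 * Real.exp (r * x) := by
  rcases le_total x 1 with hx1 | hx1
  · have : Real.exp (r * x) ≤ Real.exp r := Real.exp_le_exp.2 (by nlinarith)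
    nlinarith [Real.exp_pos (r * x), pow_nonneg hx 3]
  · have : x ≤ x ^ 3 := le_self_pow₀ hx1 (by norm_num)
    nlinarith [Real.exp_pos (r * x), Real.exp_pos r]

lemma integrable_mul_exp_of_integrable_pow_three_mul_exp {μ : Measure ℝ} [IsFiniteMeasure μ]
    (hr : 0 ≤ r) (hμ : ∀ᵐ x ∂μ, 0 ≤ x) (h : Integrable (fun x => x ^ 3 * Real.exp (r * x)) μ) :
    Integrable (fun x => x * Real.exp (r * x)) μ :=
  ((integrable_const _).add h).mono' (by fun_prop : Continuous _).aestronglyMeasurable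
    (hμ.mono fun x hx => by
      rw [Real.norm_of_nonneg (by positivity)]
      exact mul_exp_le_exp_add_pow_three_mul_exp hr hx)

end Exponential

theorem integral_integral_correction_kernel_Ioi {r : ℝ} (hr : 0 < r) {μ : Measure ℝ}
    {η g : ℝ → ℝ} (hη : ∀ x, η x = x * Real.exp (r * x) / r ^ 2) (hημ : Integrable η μ)
    (hη₂μ : Integrable (fun x => x ^ 2 * η x) μ) (hM : ∫ z, η z ∂μ ≠ 0)
    (hg : AEStronglyMeasurable g) {C : ℝ} (hC : ∀ y, ‖g y‖ ≤ C) :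
    ∫ x, (∫ y in Ioi (0 : ℝ),
        g y * (y ^ 2 * (x ^ 2 + y ^ 2) / 2) * (η x / η y) / (∫ z, η z ∂μ)) ∂μ
      = 1 / 2 * (∫ y in Ioi (0 : ℝ), g y * (r ^ 2 * y * Real.exp (-r * y)))
          * (∫ x, x ^ 2 * η x / (∫ z, η z ∂μ) ∂μ)
        + 1 / 2 * ∫ y in Ioi (0 : ℝ), g y * y ^ 2 * (r ^ 2 * y * Real.exp (-r * y)) := by
  have hkernel (y : ℝ) : y ^ 2 / η y = r ^ 2 * y * Real.exp (-r * y) := by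
    rw [hη]; exact sq_div_mul_exp_div_sq hr.ne' y
  have hα (n : ℕ) := integrableOn_mul_pow_mul_mul_exp_neg_mul_Ioi hg hC n hr
  simp_rw [← hkernel] at hα
  have hα₀ : IntegrableOn (fun y => g y * (y ^ 2 / η y)) (Ioi 0) := by simpa using hα 0
  simpa only [hkernel] using integral_integral_correction_kernel hα₀ (hα 2) hημ hη₂μ hM

/-- Decomposition of the first-order correction measure `ψ_μ`. Let `r > 0`,
`η(x) = x e^{rx}/r²`, let `μ` be a probability measure on `(0,∞)` with
`∫ x³ e^{rx} μ(dx) < ∞`, and let `α` be the measure with density `r² y e^{-ry}` on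
`(0,∞)`. With `ψ_μ(f) = ∫∫ f(y) (y²(x²+y²)/2)(η(x)/η(y)) μ(dx)/μ(η) dy`, for any
bounded measurable `f ≥ 0`,
`ψ_μ(f) = (1/2) α(f) ∫ x² (η∘μ)(dx) + (1/2) ∫ f(y) y² α(dy)`;
consequently, if `∫ y² f α(dy) > α(f) ∫ y² α(dy)`, then `ψ_μ(f) > α(f) ψ_μ(1)`. -/
theorem psi_decomposition_and_lower_bound (r : ℝ) (hr : 0 < r)
    (μ : Measure ℝ) [IsProbabilityMeasure μ] (hsupp : μ (Ioi (0 : ℝ))ᶜ = 0)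
    (hint : Integrable (fun x => x ^ 3 * Real.exp (r * x)) μ)
    (η : ℝ → ℝ) (hη : ∀ x, η x = x * Real.exp (r * x) / r ^ 2)
    (f : ℝ → ℝ) (hmeas : Measurable f) (hpos : ∀ y, 0 ≤ f y)
    (hbdd : ∃ Cb : ℝ, ∀ y, f y ≤ Cb) :
    (∫ x, (∫ y in Ioi (0 : ℝ),
          f y * (y ^ 2 * (x ^ 2 + y ^ 2) / 2) * (η x / η y) / (∫ z, η z ∂μ)) ∂μ)
      = (1 / 2) * (∫ y in Ioi (0 : ℝ), f y * (r ^ 2 * y * Real.exp (-r * y)))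
          * (∫ x, x ^ 2 * η x / (∫ z, η z ∂μ) ∂μ)
        + (1 / 2) * ∫ y in Ioi (0 : ℝ), f y * y ^ 2 * (r ^ 2 * y * Real.exp (-r * y)) ∧
    ((∫ y in Ioi (0 : ℝ), y ^ 2 * f y * (r ^ 2 * y * Real.exp (-r * y)))
        > (∫ y in Ioi (0 : ℝ), f y * (r ^ 2 * y * Real.exp (-r * y)))
          * (∫ y in Ioi (0 : ℝ), y ^ 2 * (r ^ 2 * y * Real.exp (-r * y))) →
      (∫ x, (∫ y in Ioi (0 : ℝ),
            f y * (y ^ 2 * (x ^ 2 + y ^ 2) / 2) * (η x / η y) / (∫ z, η z ∂μ)) ∂μ)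
        > (∫ y in Ioi (0 : ℝ), f y * (r ^ 2 * y * Real.exp (-r * y)))
          * ∫ x, (∫ y in Ioi (0 : ℝ),
              (y ^ 2 * (x ^ 2 + y ^ 2) / 2) * (η x / η y) / (∫ z, η z ∂μ)) ∂μ) := by
  have hμ_pos : ∀ᵐ x ∂μ, 0 < x := mem_ae_iff.2 hsupp
  have hημ : Integrable η μ :=
    ((integrable_mul_exp_of_integrable_pow_three_mul_exp hr.le (hμ_pos.mono fun _ => le_of_lt)
      hint).div_const (r ^ 2)).congr (ae_of_all _ fun x => (hη x).symm)
  have hη₂μ : Integrable (fun x => x ^ 2 * η x) μ :=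
    (hint.div_const (r ^ 2)).congr (ae_of_all _ fun x => by simp only [hη]; ring)
  have hM : ∫ z, η z ∂μ ≠ 0 :=
    (integral_pos_of_ae_pos hημ (hμ_pos.mono fun x hx => by rw [hη]; positivity)).ne'
  obtain ⟨Cb, hCb⟩ := hbdd
  have hψ {g : ℝ → ℝ} (hg : Measurable g) {C : ℝ} (hC : ∀ y, ‖g y‖ ≤ C) :=
    integral_integral_correction_kernel_Ioi hr hη hημ hη₂μ hM hg.aestronglyMeasurable hC
  have hψf := hψ hmeas fun y => (Real.norm_of_nonneg (hpos y)).trans_le (hCb y)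
  refine ⟨hψf, fun hcov => ?_⟩
  have hψ1 := hψ (g := fun _ => 1) measurable_const fun _ => norm_one.le
  simp only [one_mul, integral_sq_mul_mul_exp_neg_mul_Ioi hr] at hψ1
  have hcomm : ∫ y in Ioi (0 : ℝ), y ^ 2 * f y * (r ^ 2 * y * Real.exp (-r * y))
      = ∫ y in Ioi (0 : ℝ), f y * y ^ 2 * (r ^ 2 * y * Real.exp (-r * y)) := by
    simp_rw [mul_comm (_ ^ 2) (f _)]
  rw [hψf, hψ1, ← hcomm]
  linarith
end
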